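/- Let λ ∈ ℝ^n be nonzero with λ_1 ≥ λ_2 ≥ … ≥ λ_n ≥ 0, let τ > 0 and b ∈ ℝ^n. Suppose y ∈ ℝ satisfies ⟨Π_C(yλ + b), λ⟩ = τ, and set x* = Π_C(yλ + b). Then x* is the unique minimizer of ½‖x − b‖² over {x ∈ C : ⟨λ, x⟩ = τ}; that is, x* ∈ C, ⟨λ, x*⟩ = τ, and ‖x* − b‖ < ‖x − b‖ for every x ∈ C with ⟨λ, x⟩ = τ and x ≠ x*. -/

import Mathlib

/-! `x* = Π_C(d)` with `d = yλ + b` satisfies the variational inequality `⟨x* − d, x − x*⟩ ≥ 0`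
on `C`. A feasible `x` has `⟨λ, x − x*⟩ = 0`, so `⟨x* − b, x − x*⟩ = ⟨x* − d, x − x*⟩ ≥ 0`, whence
`‖x − b‖² ≥ ‖x* − b‖² + ‖x − x*‖²`. -/

open Matrix

/-- The matrix `B` with `(Bx)_i = x_i − x_{i+1}` for `1 ≤ i ≤ n−1` and `(Bx)_n = x_n`. -/
def Bmat (n : ℕ) : Matrix (Fin n) (Fin n) ℝ :=
  Matrix.of fun i j => if j = i then 1 else if (j : ℕ) = (i : ℕ) + 1 then -1 else 0

/-- `B_Γ`, the submatrix of `B` formed by the rows indexed by `Γ`. -/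
def subRows {n : ℕ} (Γ : Finset (Fin n)) : Matrix {i // i ∈ Γ} (Fin n) ℝ :=
  Matrix.of fun i j => Bmat n i.1 j

/-- `H = I_n − B_Γᵀ (B_Γ B_Γᵀ)⁻¹ B_Γ`, the orthogonal projection onto the null space of
`B_Γ` (equal to `I_n` when `Γ = ∅`). -/
noncomputable def Hmat {n : ℕ} (Γ : Finset (Fin n)) : Matrix (Fin n) (Fin n) ℝ :=
  1 - (subRows Γ)ᵀ * (subRows Γ * (subRows Γ)ᵀ)⁻¹ * subRows Γ

/-- The monotone nonnegative cone `C = {x : x₁ ≥ x₂ ≥ … ≥ xₙ ≥ 0}`. -/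
def coneC (n : ℕ) : Set (Fin n → ℝ) :=
  {x | (∀ i j : Fin n, i ≤ j → x j ≤ x i) ∧ ∀ i, 0 ≤ x i}

/-- `Pc` is the Euclidean (metric) projection onto the cone `C`:
`Pc d` minimizes `½‖x − d‖²` over `x ∈ C`. -/
def IsProjC {n : ℕ} (Pc : (Fin n → ℝ) → Fin n → ℝ) : Prop :=
  ∀ d : Fin n → ℝ, Pc d ∈ coneC n ∧
    ∀ x ∈ coneC n, (1/2) * ∑ i, (Pc d i - d i)^2 ≤ (1/2) * ∑ i, (x i - d i)^2

/-- `z(d) = (Bᵀ)⁻¹(d − Π_C(d))`. -/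
noncomputable def zdual {n : ℕ} (Pc : (Fin n → ℝ) → Fin n → ℝ) (d : Fin n → ℝ) :
    Fin n → ℝ :=
  Matrix.mulVec ((Bmat n)ᵀ)⁻¹ (d - Pc d)

/-- `K(d) = {Γ : Supp(z(d)) ⊆ Γ ⊆ I(Π_C(d))}`. -/
def Kset {n : ℕ} (Pc : (Fin n → ℝ) → Fin n → ℝ) (d : Fin n → ℝ) :
    Set (Finset (Fin n)) :=
  {Γ | (∀ i, zdual Pc d i ≠ 0 → i ∈ Γ) ∧ ∀ i ∈ Γ, (Bmat n).mulVec (Pc d) i = 0}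

/-- `H(d) = {I_n − B_Γᵀ(B_Γ B_Γᵀ)⁻¹ B_Γ : Γ ∈ K(d)}`, the HS-Jacobian of `Π_C` at `d`. -/
def Hset {n : ℕ} (Pc : (Fin n → ℝ) → Fin n → ℝ) (d : Fin n → ℝ) :
    Set (Matrix (Fin n) (Fin n) ℝ) :=
  {H | ∃ Γ ∈ Kset Pc d, H = Hmat Γ}

/-- `M(y) = {λᵀHλ : H ∈ H(yλ + b)}`. -/
def Mset {n : ℕ} (Pc : (Fin n → ℝ) → Fin n → ℝ) (lam b : Fin n → ℝ) (y : ℝ) : Set ℝ :=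
  {m | ∃ H ∈ Hset Pc (y • lam + b), m = dotProduct lam (H.mulVec lam)}

/-- The dual objective `φ(y) = ½‖Π_C(yλ + b)‖² − yτ − ½‖b‖²`. -/
noncomputable def phiFun {n : ℕ} (Pc : (Fin n → ℝ) → Fin n → ℝ) (lam b : Fin n → ℝ)
    (τ : ℝ) : ℝ → ℝ :=
  fun y => (1/2) * ∑ i, (Pc (y • lam + b) i)^2 - y * τ - (1/2) * ∑ i, (b i)^2

/-- `ψ(y) = ⟨Π_C(yλ + b), λ⟩ − τ` (the derivative `φ′` of the dual objective). -/
noncomputable def psiFun {n : ℕ} (Pc : (Fin n → ℝ) → Fin n → ℝ) (lam b : Fin n → ℝ)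
    (τ : ℝ) : ℝ → ℝ :=
  fun y => (∑ i, Pc (y • lam + b) i * lam i) - τ

/-- The Euclidean norm on `ℝⁿ`. -/
noncomputable def euclNorm {n : ℕ} (x : Fin n → ℝ) : ℝ :=
  Real.sqrt (∑ i, (x i)^2)

open scoped RealInnerProductSpace

section ProjectionConvex

variable {F : Type*} [NormedAddCommGroup F] [InnerProductSpace ℝ F] {K : Set F}

theorem Convex.inner_sub_nonneg_of_isMinOn (hK : Convex ℝ K) {d p : F} (hp : p ∈ K)
    (hmin : IsMinOn (fun w => ‖w - d‖) K p) {x : F} (hx : x ∈ K) :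
    0 ≤ ⟪p - d, x - p⟫ := by
  have hmin' : IsMinOn (fun w => ‖d - w‖) K p := by
    simpa only [norm_sub_rev d] using hmin
  have := (norm_eq_iInf_iff_real_inner_le_zero hK hp).1 (hmin'.iInf_eq hp).symm x hx
  rw [← neg_sub, inner_neg_left] at this
  linarith

theorem Convex.norm_sub_lt_of_isMinOn_of_inner_eq (hK : Convex ℝ K) {lam b p x : F} {y : ℝ}
    (hp : p ∈ K) (hmin : IsMinOn (fun w => ‖w - (y • lam + b)‖) K p) (hx : x ∈ K)
    (hlam : ⟪lam, x⟫ = ⟪lam, p⟫) (hne : x ≠ p) :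
    ‖p - b‖ < ‖x - b‖ := by
  have hvar := hK.inner_sub_nonneg_of_isMinOn hp hmin hx
  have hperp : ⟪x - p, lam⟫ = 0 := by
    rw [real_inner_comm, inner_sub_right, hlam, sub_self]
  have hcross : 0 ≤ ⟪x - p, p - b⟫ := by
    rw [show p - b = (p - (y • lam + b)) + y • lam by abel, inner_add_right,
      inner_smul_right, hperp, real_inner_comm]
    linarith
  have hpos : 0 < ‖x - p‖ := norm_pos_iff.2 (sub_ne_zero.2 hne)
  have hsq : ‖x - b‖ ^ 2 = ‖x - p‖ ^ 2 + 2 * ⟪x - p, p - b⟫ + ‖p - b‖ ^ 2 := by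
    rw [← norm_add_sq_real, sub_add_sub_cancel]
  rw [← sq_lt_sq₀ (norm_nonneg _) (norm_nonneg _), hsq]
  nlinarith

end ProjectionConvex

theorem convex_coneC (n : ℕ) : Convex ℝ (coneC n) := by
  rintro x ⟨hxm, hxn⟩ z ⟨hzm, hzn⟩ a c ha hc -
  simp only [coneC, Set.mem_ofPred_eq, Pi.add_apply, Pi.smul_apply, smul_eq_mul]
  refine ⟨fun i j hij => ?_, fun i => ?_⟩
  · gcongr
    exacts [hxm i j hij, hzm i j hij]
  · have := hxn i
    have := hzn i
    positivity

theorem euclNorm_eq_norm_toLp {n : ℕ} (x : Fin n → ℝ) :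
    euclNorm x = ‖WithLp.toLp 2 x‖ := by
  simp [euclNorm, EuclideanSpace.norm_eq]

theorem IsProjC.isMinOn {n : ℕ} {Pc : (Fin n → ℝ) → Fin n → ℝ} (hPc : IsProjC Pc)
    (d : Fin n → ℝ) :
    IsMinOn (fun w => ‖w - WithLp.toLp 2 d‖) (WithLp.ofLp ⁻¹' coneC n)
      (WithLp.toLp 2 (Pc d)) := by
  refine isMinOn_iff.2 fun w hw => ?_
  have := (hPc d).2 _ hw
  rw [← sq_le_sq₀ (norm_nonneg _) (norm_nonneg _), EuclideanSpace.real_norm_sq_eq,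
    EuclideanSpace.real_norm_sq_eq]
  simp only [PiLp.sub_apply]
  linarith

theorem stmt16_general {n : ℕ} (lam : Fin n → ℝ)
    (τ : ℝ) (b : Fin n → ℝ)
    (Pc : (Fin n → ℝ) → Fin n → ℝ) (hPc : IsProjC Pc)
    (y : ℝ) (hy : ∑ i, lam i * Pc (y • lam + b) i = τ) :
    Pc (y • lam + b) ∈ coneC n ∧
    (∑ i, lam i * Pc (y • lam + b) i = τ) ∧
    ∀ x ∈ coneC n, ∑ i, lam i * x i = τ → x ≠ Pc (y • lam + b) →
      euclNorm (Pc (y • lam + b) - b) < euclNorm (x - b) := by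
  refine ⟨(hPc _).1, hy, fun x hx hxτ hne => ?_⟩
  have hK : Convex ℝ (WithLp.ofLp ⁻¹' coneC n : Set (EuclideanSpace ℝ (Fin n))) :=
    (convex_coneC n).linear_preimage (WithLp.linearEquiv 2 ℝ _).toLinearMap
  have hmin := hPc.isMinOn (y • lam + b)
  rw [WithLp.toLp_add, WithLp.toLp_smul] at hmin
  have hinner : ⟪WithLp.toLp 2 lam, WithLp.toLp 2 x⟫ =
      ⟪WithLp.toLp 2 lam, WithLp.toLp 2 (Pc (y • lam + b))⟫ := by
    rw [EuclideanSpace.inner_toLp_toLp, EuclideanSpace.inner_toLp_toLp, star_trivial,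
      dotProduct_comm, dotProduct_comm (Pc _)]
    exact hxτ.trans hy.symm
  rw [euclNorm_eq_norm_toLp, euclNorm_eq_norm_toLp, WithLp.toLp_sub, WithLp.toLp_sub]
  exact hK.norm_sub_lt_of_isMinOn_of_inner_eq (hPc _).1 hmin hx hinner
    (fun h => hne (congrArg WithLp.ofLp h))

/-- if `⟨Π_C(yλ + b), λ⟩ = τ` then `x* = Π_C(yλ + b)` is the unique
minimizer of `½‖x − b‖²` over `{x ∈ C : ⟨λ, x⟩ = τ}`: it is feasible and strictly
closer to `b` than any other feasible point. -/
theorem stmt16 {n : ℕ} (hn : 0 < n) (lam : Fin n → ℝ)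
    (hmono : ∀ i j : Fin n, i ≤ j → lam j ≤ lam i)
    (hnonneg : ∀ i, 0 ≤ lam i) (hlam : lam ≠ 0)
    (τ : ℝ) (hτ : 0 < τ) (b : Fin n → ℝ)
    (Pc : (Fin n → ℝ) → Fin n → ℝ) (hPc : IsProjC Pc)
    (y : ℝ) (hy : ∑ i, lam i * Pc (y • lam + b) i = τ) :
    Pc (y • lam + b) ∈ coneC n ∧
    (∑ i, lam i * Pc (y • lam + b) i = τ) ∧
    ∀ x ∈ coneC n, ∑ i, lam i * x i = τ → x ≠ Pc (y • lam + b) →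
      euclNorm (Pc (y • lam + b) - b) < euclNorm (x - b) :=
  stmt16_general lam τ b Pc hPc y hy
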